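/- Given the forward interpolations x_t = a_t x0 + b_t xT + c_t m + s_t ε_t and x_{t-1} = a_{t-1} x0 + b_{t-1} xT + c_{t-1} m + s_{t-1} ε_{t-1} with independent standard Gaussians, eliminating x0 gives x_t = (a_t/a_{t-1}) x_{t-1} + (b_t - b_{t-1} a_t/a_{t-1}) xT + (c_t - c_{t-1} a_t/a_{t-1}) m + √(s_t² - s_{t-1}² a_t²/a_{t-1}²) ε, provided a_{t-1} ≠ 0 and s_t² ≥ s_{t-1}² a_t²/a_{t-1}²; i.e. the conditional distribution of x_t given x_{t-1}, xT is Gaussian with this mean and variance. -/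

import Mathlib

/-!
Substituting `x_{t-1}`, the `x0`, `xT`, `m` terms of the left side collapse to the mean
`a_t x0 + b_t xT + c_t m` of `x_t`, and what remains is `σ ε + (a_t / a_{t-1}) s_{t-1} ε_{t-1}`,
with `σ = √(s_t² - s_{t-1}² a_t² / a_{t-1}²)`: a sum of independent centred Gaussians of
variance `σ² + a_t² s_{t-1}² / a_{t-1}² = s_t²`, the variance of `x_t`.
-/

open MeasureTheory ProbabilityTheory
open scoped NNReal

namespace ProbabilityTheory

variable {Ω : Type*} {mΩ : MeasurableSpace Ω} {P : Measure Ω} {X Y : Ω → ℝ}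

-- `P.map X` is `0` unless `X` is a.e.-measurable, and a Gaussian law is nonzero.
lemma hasLaw_gaussianReal_of_map_eq {μ : ℝ} {v : ℝ≥0} (h : P.map X = gaussianReal μ v) :
    HasLaw X (gaussianReal μ v) P where
  aemeasurable := AEMeasurable.of_map_ne_zero (by simp [h, NeZero.ne])
  map_eq := h

lemma map_const_add_mul_of_map_eq_gaussianReal_zero_one (hX : P.map X = gaussianReal 0 1)
    (c s : ℝ) :
    P.map (fun ω ↦ c + s * X ω) = gaussianReal c (.mk (s ^ 2) (sq_nonneg s)) := by
  simpa using (gaussianReal_const_add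
    (gaussianReal_const_mul (hasLaw_gaussianReal_of_map_eq hX) s) c).map_eq

lemma IndepFun.map_const_add_mul_add_mul_of_gaussianReal_zero_one (hXY : IndepFun X Y P)
    (hX : P.map X = gaussianReal 0 1) (hY : P.map Y = gaussianReal 0 1) (c a b : ℝ) :
    P.map (fun ω ↦ c + (a * X ω + b * Y ω))
      = gaussianReal c (.mk (a ^ 2 + b ^ 2) (by positivity)) := by
  have hindep : IndepFun (fun ω ↦ a * X ω) (fun ω ↦ b * Y ω) P :=
    hXY.comp (measurable_const_mul a) (measurable_const_mul b)
  have hsum := gaussianReal_add_gaussianReal_of_indepFun hindep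
    (by simpa using map_const_add_mul_of_map_eq_gaussianReal_zero_one hX 0 a)
    (by simpa using map_const_add_mul_of_map_eq_gaussianReal_zero_one hY 0 b)
  exact (gaussianReal_const_add (hasLaw_gaussianReal_of_map_eq hsum) c).map_eq.trans
    (by rw [gaussianReal_ext_iff]; exact ⟨by ring, rfl⟩)

end ProbabilityTheory

theorem forward_interpolation_eliminate_x0_general
    {Ω : Type*} [MeasureSpace Ω]
    (at_ atm1 bt btm1 ct ctm1 st stm1 : ℝ)
    (hatm1 : atm1 ≠ 0)
    (hvar : stm1 ^ 2 * at_ ^ 2 / atm1 ^ 2 ≤ st ^ 2)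
    (x0 xT m : ℝ)
    (εt εtm1 ε : Ω → ℝ)
    (hlawεt : Measure.map εt ℙ = gaussianReal 0 1)
    (hlawεtm1 : Measure.map εtm1 ℙ = gaussianReal 0 1)
    (hlawε : Measure.map ε ℙ = gaussianReal 0 1)
    (hindep : IndepFun ε εtm1 ℙ)
    (xt xtm1 : Ω → ℝ)
    (hxt : ∀ ω, xt ω = at_ * x0 + bt * xT + ct * m + st * εt ω)
    (hxtm1 : ∀ ω, xtm1 ω = atm1 * x0 + btm1 * xT + ctm1 * m + stm1 * εtm1 ω) :
    Measure.map (fun ω =>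
        (at_ / atm1) * xtm1 ω + (bt - btm1 * (at_ / atm1)) * xT
          + (ct - ctm1 * (at_ / atm1)) * m
          + Real.sqrt (st ^ 2 - stm1 ^ 2 * at_ ^ 2 / atm1 ^ 2) * ε ω) ℙ
      = Measure.map xt ℙ := by
  set σ := Real.sqrt (st ^ 2 - stm1 ^ 2 * at_ ^ 2 / atm1 ^ 2) with hσ
  have hlhs : (fun ω => (at_ / atm1) * xtm1 ω + (bt - btm1 * (at_ / atm1)) * xT
        + (ct - ctm1 * (at_ / atm1)) * m + σ * ε ω)
      = fun ω => (at_ * x0 + bt * xT + ct * m) + (σ * ε ω + (at_ / atm1 * stm1) * εtm1 ω) := by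
    funext ω
    rw [hxtm1]
    field_simp
    ring
  have hvariance : σ ^ 2 + (at_ / atm1 * stm1) ^ 2 = st ^ 2 := by
    rw [hσ, Real.sq_sqrt (sub_nonneg.mpr hvar)]
    ring
  rw [hlhs, hindep.map_const_add_mul_add_mul_of_gaussianReal_zero_one hlawε hlawεtm1,
    show xt = _ from funext hxt, map_const_add_mul_of_map_eq_gaussianReal_zero_one hlawεt]
  simp only [hvariance]

/-- Eliminating `x0` from the forward interpolations
`x_t = a_t x0 + b_t xT + c_t m + s_t ε_t` and
`x_{t-1} = a_{t-1} x0 + b_{t-1} xT + c_{t-1} m + s_{t-1} ε_{t-1}` gives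
`x_t = (a_t/a_{t-1}) x_{t-1} + (b_t - b_{t-1} a_t/a_{t-1}) xT + (c_t - c_{t-1} a_t/a_{t-1}) m
  + √(s_t² - s_{t-1}² a_t²/a_{t-1}²) ε` in distribution, with `ε` a standard Gaussian
independent of `ε_{t-1}`; i.e. the conditional distribution of `x_t` given `x_{t-1}` (and `xT`)
is Gaussian with this mean and variance. -/
theorem forward_interpolation_eliminate_x0
    {Ω : Type*} [MeasureSpace Ω] [IsProbabilityMeasure (ℙ : Measure Ω)]
    (at_ atm1 bt btm1 ct ctm1 st stm1 : ℝ)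
    (hatm1 : atm1 ≠ 0)
    (hvar : stm1 ^ 2 * at_ ^ 2 / atm1 ^ 2 ≤ st ^ 2)
    (x0 xT m : ℝ)
    (εt εtm1 ε : Ω → ℝ)
    (hmεt : Measurable εt) (hmεtm1 : Measurable εtm1) (hmε : Measurable ε)
    (hlawεt : Measure.map εt ℙ = gaussianReal 0 1)
    (hlawεtm1 : Measure.map εtm1 ℙ = gaussianReal 0 1)
    (hlawε : Measure.map ε ℙ = gaussianReal 0 1)
    (hindep : IndepFun ε εtm1 ℙ)
    (xt xtm1 : Ω → ℝ)
    (hxt : ∀ ω, xt ω = at_ * x0 + bt * xT + ct * m + st * εt ω)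
    (hxtm1 : ∀ ω, xtm1 ω = atm1 * x0 + btm1 * xT + ctm1 * m + stm1 * εtm1 ω) :
    Measure.map (fun ω =>
        (at_ / atm1) * xtm1 ω + (bt - btm1 * (at_ / atm1)) * xT
          + (ct - ctm1 * (at_ / atm1)) * m
          + Real.sqrt (st ^ 2 - stm1 ^ 2 * at_ ^ 2 / atm1 ^ 2) * ε ω) ℙ
      = Measure.map xt ℙ :=
  forward_interpolation_eliminate_x0_general at_ atm1 bt btm1 ct ctm1 st stm1 hatm1 hvar x0 xT m εt
    εtm1 ε hlawεt hlawεtm1 hlawε hindep xt xtm1 hxt hxtm1
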